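/- Let L ⊆ {0,1}^h be a set of leaves, 𝛕 a label of height h, and 𝛔 a non-interacting SWAP with indices I. Let s be a τL-branching ℓ-bit string with 0 < ℓ < h. Then: (i) if ℓ ∉ I and ℓ+1 ∉ I, then σ_ℓ s is (𝛔𝛕)L-branching; (ii) if ℓ ∈ I, then σ_{ℓ−1}(ωs) = ω(σ_ℓ s) is (𝛔𝛕)L-branching; (iii) if ℓ+1 ∈ I, then either σ_ℓ s is (𝛔𝛕)L-branching or there exists a bit b ∈ {0,1} such that (σ_ℓ s)b is (𝛔𝛕)L-branching. -/

import Mathlib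

abbrev F2 := ZMod 2

/-- The action of a permutation of positions on a list: `(π · l) j = l (π⁻¹ j)`.
(Out-of-range positions are filled with `default`; these are never used when the
permutation has support inside the length of the list.) -/
def permList {α : Type*} [Inhabited α] (π : Equiv.Perm ℕ) (l : List α) : List α :=
  (List.range l.length).map fun j => l.getD (π.symm j) default

/-- A label of height `h`: a family of permutations `τ_ℓ` of the positions `{0, …, ℓ-1}`
(0-indexed); each `τ_ℓ` fixes all positions `≥ ℓ`. -/
def IsLabel (h : ℕ) (τ : ℕ → Equiv.Perm ℕ) : Prop :=
  ∀ ℓ j, ℓ ≤ h → ℓ ≤ j → τ ℓ j = j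

/-- `σ` is the non-interacting SWAP of height `h` with indices `I` (0-indexed):
the pairs `{i,i+1}`, `i ∈ I`, are pairwise disjoint and contained in `{0,…,h-1}`, and
`σ_ℓ` is the product of the transpositions of positions `i, i+1` over `i ∈ I` with
`i + 1 ≤ ℓ - 1`. -/
def IsNonInteractingSwap (h : ℕ) (I : Finset ℕ) (σ : ℕ → Equiv.Perm ℕ) : Prop :=
  (∀ i ∈ I, i + 2 ≤ h) ∧
  (∀ i ∈ I, ∀ j ∈ I, i ≠ j → i + 2 ≤ j ∨ j + 2 ≤ i) ∧
  (∀ ℓ, ∀ i ∈ I, i + 2 ≤ ℓ → σ ℓ i = i + 1 ∧ σ ℓ (i + 1) = i) ∧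
  (∀ ℓ j, (¬∃ i ∈ I, i + 2 ≤ ℓ ∧ (j = i ∨ j = i + 1)) → σ ℓ j = j)

/-- The map `σ⋆`: it sends an `ℓ`-bit string `s` to `s` (viewed as a starred string) if the
last position of `s` is not swapped out of the string (i.e. `ℓ ∉ I`, 1-indexed), and to
`(ωs)⋆` — last bit replaced by the placeholder `⋆` (here `none`) — otherwise. -/
def sigmaStar (I : Finset ℕ) (s : List Bool) : List (Option Bool) :=
  if s ≠ [] ∧ (s.length - 1) ∈ I then (s.dropLast.map some) ++ [none] else s.map some

/-- `s` is a `τL`-truncation: `s` is a prefix of some element of `τ_h L`. -/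
def IsTrunc (τh : Equiv.Perm ℕ) (L : Finset (List Bool)) (s : List Bool) : Prop :=
  ∃ t ∈ L, s <+: permList τh t

/-- `s` is `τL`-branching: either `s` is empty, or `s ∈ τ_h L`, or `0 < ‖s‖ < h` and both
`s0` and `s1` are `τL`-truncations. -/
def IsBranching (h : ℕ) (τh : Equiv.Perm ℕ) (L : Finset (List Bool)) (s : List Bool) :
    Prop :=
  s = [] ∨ (∃ t ∈ L, s = permList τh t) ∨
    (0 < s.length ∧ s.length < h ∧
      IsTrunc τh L (s ++ [false]) ∧ IsTrunc τh L (s ++ [true]))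

/-- The branching truncation `Ω^{τL} s`: the longest strict prefix of `s` that is
`τL`-branching. -/
noncomputable def Omega (h : ℕ) (τh : Equiv.Perm ℕ) (L : Finset (List Bool))
    (s : List Bool) : List Bool :=
  s.take (sSup {k | k < s.length ∧ IsBranching h τh L (s.take k)})


/-!
Write `u = τ_h t` for a leaf `t` extending `s b`, so that `(στ)_h t = σ_h u`. Below position `ℓ`
the permutation `σ_h` acts as `σ_ℓ` unless the pair `{ℓ - 1, ℓ}` (0-indexed) is swapped. Hence
`σ_h u` begins with `(σ_ℓ s) b` in case (i); with `ω(σ_ℓ s) b` in case (ii), where position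
`ℓ - 1` receives `u_ℓ = b`; and with `(σ_ℓ s) u_{ℓ+1} b` in case (iii). In case (iii) the leaves
extending `s0` and `s1` either disagree at position `ℓ + 1`, so that `σ_ℓ s` branches, or agree
there on a bit `c`, so that `(σ_ℓ s) c` branches.
-/
namespace List

variable {α : Type*}

theorem append_singleton_prefix_of_getElem? {a v : List α} {b : α} (ha : a <+: v)
    (hb : v[a.length]? = some b) : a ++ [b] <+: v := by
  rw [prefix_iff_getElem?] at ha ⊢
  intro i hi
  rw [length_append, length_singleton] at hi
  rcases Nat.lt_or_ge i a.length with hi' | hi'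
  · rw [getElem_append_left hi']; exact ha i hi'
  · obtain rfl : i = a.length := by omega
    simpa using hb

end List

section PermList

variable {α : Type*} [Inhabited α]

@[simp]
theorem length_permList (π : Equiv.Perm ℕ) (l : List α) : (permList π l).length = l.length := by
  simp [permList]

theorem getElem?_permList {π : Equiv.Perm ℕ} {l : List α} {j : ℕ} (hj : j < l.length)
    (hπj : π.symm j < l.length) : (permList π l)[j]? = l[π.symm j]? := by
  simp [permList, hj, hπj]

theorem getD_permList {π : Equiv.Perm ℕ} {l : List α} {j : ℕ} (hj : j < l.length) :
    (permList π l).getD j default = l.getD (π.symm j) default := by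
  simp [permList, hj]

theorem permList_congr {π π' : Equiv.Perm ℕ} {l : List α}
    (h : ∀ j < l.length, π.symm j = π'.symm j) : permList π l = permList π' l :=
  List.map_congr_left fun j hj => by rw [h j (List.mem_range.mp hj)]

theorem take_permList {π : Equiv.Perm ℕ} {l : List α} {n : ℕ}
    (hπ : ∀ j < n, π.symm j < n) : (permList π l).take n = permList π (l.take n) := by
  simp only [permList, ← List.map_take, List.take_range, List.length_take]
  refine List.map_congr_left fun j hj => ?_
  rw [List.mem_range] at hj
  rw [List.getD_eq_getElem?_getD, List.getD_eq_getElem?_getD, List.getElem?_take,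
    if_pos (hπ j (by omega))]

theorem List.IsPrefix.permList {π : Equiv.Perm ℕ} {s u : List α} (hs : s <+: u)
    (hπ : ∀ j < s.length, π.symm j < s.length) : permList π s <+: permList π u := by
  rw [List.prefix_iff_eq_take.mp hs, ← take_permList hπ]
  exact List.take_prefix _ _

theorem permList_mul {π ρ : Equiv.Perm ℕ} {l : List α}
    (hπ : ∀ j < l.length, π.symm j < l.length) :
    permList (π * ρ) l = permList π (permList ρ l) := by
  rw [permList, permList, length_permList]
  exact List.map_congr_left fun j hj => by
    rw [getD_permList (hπ j (List.mem_range.mp hj))]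
    rfl

end PermList

namespace IsNonInteractingSwap

variable {h : ℕ} {I : Finset ℕ} {σ : ℕ → Equiv.Perm ℕ} {α : Type*} [Inhabited α]

theorem add_two_le (hσ : IsNonInteractingSwap h I σ) {i : ℕ} (hi : i ∈ I) : i + 2 ≤ h :=
  hσ.1 i hi

theorem succ_ne_of_mem (hσ : IsNonInteractingSwap h I σ) {i₀ i : ℕ} (hi₀ : i₀ ∈ I)
    (hi : i ∈ I) : i + 1 ≠ i₀ := by
  rintro rfl
  rcases hσ.2.1 i hi (i + 1) hi₀ (by omega) with h' | h' <;> omega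

theorem apply_left (hσ : IsNonInteractingSwap h I σ) {ℓ i : ℕ} (hi : i ∈ I)
    (hiℓ : i + 2 ≤ ℓ) : σ ℓ i = i + 1 :=
  (hσ.2.2.1 ℓ i hi hiℓ).1

theorem apply_right (hσ : IsNonInteractingSwap h I σ) {ℓ i : ℕ} (hi : i ∈ I)
    (hiℓ : i + 2 ≤ ℓ) : σ ℓ (i + 1) = i :=
  (hσ.2.2.1 ℓ i hi hiℓ).2

theorem apply_eq_self (hσ : IsNonInteractingSwap h I σ) {ℓ j : ℕ}
    (hj : ¬∃ i ∈ I, j = i ∨ j = i + 1) : σ ℓ j = j :=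
  hσ.2.2.2 ℓ j fun ⟨i, hi, _, hji⟩ => hj ⟨i, hi, hji⟩

theorem apply_apply (hσ : IsNonInteractingSwap h I σ) (ℓ j : ℕ) : σ ℓ (σ ℓ j) = j := by
  by_cases hj : ∃ i ∈ I, i + 2 ≤ ℓ ∧ (j = i ∨ j = i + 1)
  · obtain ⟨i, hi, hiℓ, rfl | rfl⟩ := hj
    · rw [hσ.apply_left hi hiℓ, hσ.apply_right hi hiℓ]
    · rw [hσ.apply_right hi hiℓ, hσ.apply_left hi hiℓ]
  · rw [hσ.2.2.2 ℓ j hj, hσ.2.2.2 ℓ j hj]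

theorem symm_apply (hσ : IsNonInteractingSwap h I σ) (ℓ j : ℕ) : (σ ℓ).symm j = σ ℓ j :=
  (Equiv.symm_apply_eq _).mpr (hσ.apply_apply ℓ j).symm

theorem apply_lt (hσ : IsNonInteractingSwap h I σ) {ℓ j : ℕ} (hj : j < ℓ) : σ ℓ j < ℓ := by
  by_cases hj' : ∃ i ∈ I, i + 2 ≤ ℓ ∧ (j = i ∨ j = i + 1)
  · obtain ⟨i, hi, hiℓ, rfl | rfl⟩ := hj'
    · rw [hσ.apply_left hi hiℓ]; omega
    · rw [hσ.apply_right hi hiℓ]; omega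
  · rwa [hσ.2.2.2 ℓ j hj']

theorem apply_eq_apply_of_le (hσ : IsNonInteractingSwap h I σ) {ℓ m j : ℕ}
    (hℓ : ∀ i ∈ I, i + 1 ≠ ℓ) (hℓm : ℓ ≤ m) (hj : j < ℓ) : σ m j = σ ℓ j := by
  by_cases hj' : ∃ i ∈ I, j = i ∨ j = i + 1
  · obtain ⟨i, hi, rfl | rfl⟩ := hj' <;> have := hℓ _ hi
    · rw [hσ.apply_left hi (by omega), hσ.apply_left hi (by omega)]
    · rw [hσ.apply_right hi (by omega), hσ.apply_right hi (by omega)]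
  · rw [hσ.apply_eq_self hj', hσ.apply_eq_self hj']


theorem permList_prefix_permList (hσ : IsNonInteractingSwap h I σ) {s u : List α}
    (hs : s <+: u) (hℓ : ∀ i ∈ I, i + 1 ≠ s.length) (hsh : s.length ≤ h) :
    permList (σ s.length) s <+: permList (σ h) u := by
  have hagree : ∀ j < s.length, (σ h).symm j = (σ s.length).symm j := fun j hj => by
    rw [hσ.symm_apply, hσ.symm_apply, hσ.apply_eq_apply_of_le hℓ hsh hj]
  rw [permList_congr fun j hj => (hagree j hj).symm]
  refine hs.permList fun j hj => ?_
  rw [hagree j hj, hσ.symm_apply]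
  exact hσ.apply_lt hj

theorem dropLast_permList (hσ : IsNonInteractingSwap h I σ) {s : List α}
    (hs : s.length - 1 ∈ I) :
    (permList (σ s.length) s).dropLast = permList (σ (s.length - 1)) s.dropLast := by
  have hagree : ∀ j < s.length - 1, σ s.length j = σ (s.length - 1) j := fun j hj =>
    hσ.apply_eq_apply_of_le (fun i hi => hσ.succ_ne_of_mem hs hi) (Nat.sub_le _ _) hj
  rw [List.dropLast_eq_take, length_permList, take_permList, ← List.dropLast_eq_take]
  · refine permList_congr fun j hj => ?_
    rw [List.length_dropLast] at hj
    rw [hσ.symm_apply, hσ.symm_apply, hagree j hj]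
  · intro j hj
    rw [hσ.symm_apply, hagree j hj]
    exact hσ.apply_lt hj

theorem append_prefix_permList_of_not_mem (hσ : IsNonInteractingSwap h I σ) {s u : List α}
    {b : α} (hu : s ++ [b] <+: u) (hlen : u.length = h)
    (hℓ₁ : s.length - 1 ∉ I) (hℓ : s.length ∉ I) :
    permList (σ s.length) s ++ [b] <+: permList (σ h) u := by
  have hlt : s.length < h := hlen ▸ by simpa using hu.length_le
  have hfix : σ h s.length = s.length := hσ.apply_eq_self <| by
    rintro ⟨i, hi, hi' | hi'⟩
    · exact hℓ (hi' ▸ hi)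
    · exact hℓ₁ (by rwa [hi', Nat.add_sub_cancel])
  have hI : ∀ i ∈ I, i + 1 ≠ s.length := fun i hi e => hℓ₁ (by rwa [← e, Nat.add_sub_cancel])
  refine List.append_singleton_prefix_of_getElem?
    (hσ.permList_prefix_permList ((List.prefix_append _ _).trans hu) hI hlt.le) ?_
  rw [length_permList, getElem?_permList (by omega) (by rw [hσ.symm_apply, hfix]; omega),
    hσ.symm_apply, hfix, List.prefix_iff_getElem?.mp hu _ (by simp)]
  simp

theorem dropLast_append_prefix_permList (hσ : IsNonInteractingSwap h I σ) {s u : List α}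
    {b : α} (hu : s ++ [b] <+: u) (hlen : u.length = h) (hs : 0 < s.length)
    (hℓ : s.length - 1 ∈ I) :
    (permList (σ s.length) s).dropLast ++ [b] <+: permList (σ h) u := by
  have hlt : s.length < h := hlen ▸ by simpa using hu.length_le
  have hk : s.dropLast.length = s.length - 1 := List.length_dropLast
  have hσk : σ h (s.length - 1) = s.length := by
    rw [hσ.apply_left hℓ (hσ.add_two_le hℓ)]; omega
  have hp := hσ.permList_prefix_permList (((List.dropLast_prefix s).trans
    (List.prefix_append _ _)).trans hu) (fun i hi => hk ▸ hσ.succ_ne_of_mem hℓ hi)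
    (by omega)
  rw [hk] at hp
  rw [hσ.dropLast_permList hℓ]
  refine List.append_singleton_prefix_of_getElem? hp ?_
  rw [length_permList, hk, getElem?_permList (by omega) (by rw [hσ.symm_apply, hσk]; omega),
    hσ.symm_apply, hσk, List.prefix_iff_getElem?.mp hu _ (by simp)]
  simp

theorem exists_append_pair_prefix_permList (hσ : IsNonInteractingSwap h I σ)
    {s u : List α} {b : α} (hu : s ++ [b] <+: u) (hlen : u.length = h)
    (hℓ : s.length ∈ I) : ∃ c, permList (σ s.length) s ++ [c, b] <+: permList (σ h) u := by
  have hℓh := hσ.add_two_le hℓ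
  have hp := hσ.permList_prefix_permList ((List.prefix_append _ _).trans hu)
    (fun i hi => hσ.succ_ne_of_mem hℓ hi) (by omega)
  refine ⟨u[s.length + 1], ?_⟩
  rw [show [u[s.length + 1], b] = [u[s.length + 1]] ++ [b] from rfl, ← List.append_assoc]
  refine List.append_singleton_prefix_of_getElem?
    (List.append_singleton_prefix_of_getElem? hp ?_) ?_
  · rw [length_permList, getElem?_permList (by omega)
      (by rw [hσ.symm_apply, hσ.apply_left hℓ hℓh]; omega), hσ.symm_apply,
      hσ.apply_left hℓ hℓh]
    simp
  · simp only [List.length_append, length_permList, List.length_singleton]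
    rw [getElem?_permList (by omega) (by rw [hσ.symm_apply, hσ.apply_right hℓ hℓh]; omega),
      hσ.symm_apply, hσ.apply_right hℓ hℓh, List.prefix_iff_getElem?.mp hu _ (by simp)]
    simp

end IsNonInteractingSwap

section Branching

variable {h : ℕ} {π ρ : Equiv.Perm ℕ} {L : Finset (List Bool)} {w : List Bool}

theorem IsTrunc.of_prefix {w' : List Bool} (hw' : IsTrunc π L w') (hw : w <+: w') :
    IsTrunc π L w :=
  let ⟨t, ht, hp⟩ := hw'
  ⟨t, ht, hw.trans hp⟩

theorem IsTrunc.exists_isTrunc_mul (hL : ∀ t ∈ L, t.length = h) (hπ : ∀ j < h, π.symm j < h)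
    (hw : IsTrunc ρ L w) :
    ∃ u, w <+: u ∧ u.length = h ∧ ∀ v, v <+: permList π u → IsTrunc (π * ρ) L v := by
  obtain ⟨t, ht, hp⟩ := hw
  refine ⟨permList ρ t, hp, by rw [length_permList, hL t ht], fun v hv => ⟨t, ht, ?_⟩⟩
  rwa [permList_mul (by rwa [hL t ht])]

theorem isBranching_of_isTrunc (h0 : 0 < w.length) (hh : w.length < h)
    (hw : ∀ b, IsTrunc π L (w ++ [b])) : IsBranching h π L w :=
  Or.inr (Or.inr ⟨h0, hh, hw false, hw true⟩)

theorem IsBranching.isTrunc_append (hL : ∀ t ∈ L, t.length = h) (hw : IsBranching h π L w)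
    (h0 : 0 < w.length) (hh : w.length < h) (b : Bool) : IsTrunc π L (w ++ [b]) := by
  rcases hw with rfl | ⟨t, ht, rfl⟩ | ⟨-, -, hf, ht⟩
  · simp at h0
  · rw [length_permList, hL t ht] at hh
    exact absurd hh (lt_irrefl h)
  · cases b
    exacts [hf, ht]

theorem isBranching_or_isBranching_append {c₀ c₁ : Bool} (h0 : 0 < w.length)
    (hh : w.length + 1 < h) (h₀ : IsTrunc π L (w ++ [c₀, false]))
    (h₁ : IsTrunc π L (w ++ [c₁, true])) :
    IsBranching h π L w ∨ ∃ c, IsBranching h π L (w ++ [c]) := by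
  by_cases hc : c₀ = c₁
  · subst hc
    refine Or.inr ⟨c₀, isBranching_of_isTrunc (by simp) (by simpa) fun b => ?_⟩
    rw [List.append_assoc]
    cases b
    exacts [h₀, h₁]
  · refine Or.inl (isBranching_of_isTrunc h0 (by omega) fun b => ?_)
    obtain rfl | rfl : b = c₀ ∨ b = c₁ := by
      cases b <;> cases c₀ <;> cases c₁ <;> simp_all
    · exact h₀.of_prefix ⟨[false], by simp⟩
    · exact h₁.of_prefix ⟨[true], by simp⟩

end Branching

theorem stmt10_general (h : ℕ) (I : Finset ℕ) (σ τ : ℕ → Equiv.Perm ℕ) (L : Finset (List Bool))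
    (hσ : IsNonInteractingSwap h I σ)
    (hL : ∀ t ∈ L, t.length = h)
    (s : List Bool) (h1 : 0 < s.length) (h2 : s.length < h)
    (hbr : IsBranching h (τ h) L s) :
    -- (i) if ℓ ∉ I and ℓ+1 ∉ I (1-indexed), then σ_ℓ s is (στ)L-branching
    (((s.length - 1) ∉ I ∧ s.length ∉ I) →
      IsBranching h (σ h * τ h) L (permList (σ s.length) s)) ∧
    -- (ii) if ℓ ∈ I, then σ_{ℓ-1}(ωs) = ω(σ_ℓ s) is (στ)L-branching
    ((s.length - 1) ∈ I →
      (permList (σ (s.length - 1)) s.dropLast = (permList (σ s.length) s).dropLast ∧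
       IsBranching h (σ h * τ h) L ((permList (σ s.length) s).dropLast))) ∧
    -- (iii) if ℓ+1 ∈ I, then σ_ℓ s or (σ_ℓ s)b is (στ)L-branching
    (s.length ∈ I →
      (IsBranching h (σ h * τ h) L (permList (σ s.length) s) ∨
       ∃ b : Bool, IsBranching h (σ h * τ h) L (permList (σ s.length) s ++ [b]))) := by
  have hσh : ∀ j < h, (σ h).symm j < h := fun j hj => hσ.symm_apply h j ▸ hσ.apply_lt hj
  have hext : ∀ b, ∃ u, s ++ [b] <+: u ∧ u.length = h ∧
      ∀ v, v <+: permList (σ h) u → IsTrunc (σ h * τ h) L v := fun b =>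
    (hbr.isTrunc_append hL h1 h2 b).exists_isTrunc_mul hL hσh
  refine ⟨fun ⟨hℓ₁, hℓ⟩ => ?_, fun hℓ => ⟨(hσ.dropLast_permList hℓ).symm, ?_⟩, fun hℓ => ?_⟩
  · refine isBranching_of_isTrunc (by simpa) (by simpa) fun b => ?_
    obtain ⟨u, hu, hlen, hv⟩ := hext b
    exact hv _ (hσ.append_prefix_permList_of_not_mem hu hlen hℓ₁ hℓ)
  · rcases Nat.lt_or_ge 1 s.length with hs | hs
    · have hdrop : (permList (σ s.length) s).dropLast.length = s.length - 1 := by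
        rw [List.length_dropLast, length_permList]
      refine isBranching_of_isTrunc (by omega) (by omega) fun b => ?_
      obtain ⟨u, hu, hlen, hv⟩ := hext b
      exact hv _ (hσ.dropLast_append_prefix_permList hu hlen h1 hℓ)
    · exact Or.inl (List.eq_nil_of_length_eq_zero (by
        rw [List.length_dropLast, length_permList]; omega))
  · have key : ∀ b, ∃ c, IsTrunc (σ h * τ h) L (permList (σ s.length) s ++ [c, b]) := by
      intro b
      obtain ⟨u, hu, hlen, hv⟩ := hext b
      obtain ⟨c, hc⟩ := hσ.exists_append_pair_prefix_permList hu hlen hℓ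
      exact ⟨c, hv _ hc⟩
    obtain ⟨c₀, h₀⟩ := key false
    obtain ⟨c₁, h₁⟩ := key true
    exact isBranching_or_isBranching_append (by simpa) (by
      rw [length_permList]; have := hσ.add_two_le hℓ; omega) h₀ h₁

theorem stmt10 (h : ℕ) (I : Finset ℕ) (σ τ : ℕ → Equiv.Perm ℕ) (L : Finset (List Bool))
    (hσ : IsNonInteractingSwap h I σ) (hτ : IsLabel h τ)
    (hL : ∀ t ∈ L, t.length = h)
    (s : List Bool) (h1 : 0 < s.length) (h2 : s.length < h)
    (hbr : IsBranching h (τ h) L s) :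
    -- (i) if ℓ ∉ I and ℓ+1 ∉ I (1-indexed), then σ_ℓ s is (στ)L-branching
    (((s.length - 1) ∉ I ∧ s.length ∉ I) →
      IsBranching h (σ h * τ h) L (permList (σ s.length) s)) ∧
    -- (ii) if ℓ ∈ I, then σ_{ℓ-1}(ωs) = ω(σ_ℓ s) is (στ)L-branching
    ((s.length - 1) ∈ I →
      (permList (σ (s.length - 1)) s.dropLast = (permList (σ s.length) s).dropLast ∧
       IsBranching h (σ h * τ h) L ((permList (σ s.length) s).dropLast))) ∧
    -- (iii) if ℓ+1 ∈ I, then σ_ℓ s or (σ_ℓ s)b is (στ)L-branching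
    (s.length ∈ I →
      (IsBranching h (σ h * τ h) L (permList (σ s.length) s) ∨
       ∃ b : Bool, IsBranching h (σ h * τ h) L (permList (σ s.length) s ++ [b]))) :=
  stmt10_general h I σ τ L hσ hL s h1 h2 hbr
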